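/- Let H, K, G be Hilbert spaces, A : H → G and B : K → G bounded linear operators with R(B) ⊆ R(A). Then for every closed subspace M of H such that H = N(A) ⊕ M (direct, not necessarily orthogonal, sum), there exists a unique bounded operator C : K → H with AC = B and R(C) ⊆ M; moreover N(C) = N(B). -/

import Mathlib

open LinearMap Filter

section Algebraic

variable {R E F G : Type*} [Ring R] [AddCommGroup E] [Module R E] [AddCommGroup F] [Module R F]
  [AddCommGroup G] [Module R G] {A : E →ₗ[R] G} {M : Submodule R E}

/-- `A` maps `M` isomorphically onto `range A`, so `B` lifts through that isomorphism. -/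
theorem LinearMap.exists_comp_eq_and_range_le_of_isCompl {B : F →ₗ[R] G} (hBA : range B ≤ range A)
    (hM : IsCompl (ker A) M) : ∃ C : F →ₗ[R] E, A ∘ₗ C = B ∧ range C ≤ M := by
  let e := LinearEquiv.ofInjective (A.domRestrict M) (injective_domRestrict_iff.2 hM.disjoint.symm)
  have hrange : range (A.domRestrict M) = range A := by
    rw [range_domRestrict, Submodule.map_eq_range_iff]
    exact hM.codisjoint.symm
  refine ⟨M.subtype ∘ₗ e.symm.toLinearMap ∘ₗ B.codRestrict _ (fun k ↦ hrange ▸ hBA ⟨k, rfl⟩),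
    ?_, ?_⟩
  · ext k
    exact congrArg Subtype.val (e.apply_symm_apply _)
  · exact (range_comp_le_range _ _).trans M.range_subtype.le

theorem LinearMap.eq_of_comp_eq_of_range_le (hM : Disjoint (ker A) M) {C C' : F →ₗ[R] E}
    (h : A ∘ₗ C = A ∘ₗ C') (hC : range C ≤ M) (hC' : range C' ≤ M) : C = C' := by
  ext k
  exact injOn_of_disjoint_ker le_rfl hM.symm (hC ⟨k, rfl⟩) (hC' ⟨k, rfl⟩) (congr($h k))

theorem LinearMap.ker_comp_of_range_le (hM : Disjoint (ker A) M) {C : F →ₗ[R] E}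
    (hC : range C ≤ M) : ker (A ∘ₗ C) = ker C := by
  rw [ker_comp, ← inf_top_eq (Submodule.comap C (ker A)), ← range_le_iff_comap.1 hC,
    ← Submodule.comap_inf, hM.eq_bot, Submodule.comap_bot]

end Algebraic

section ClosedGraph

variable {𝕜 E F G : Type*} [NontriviallyNormedField 𝕜] [NormedAddCommGroup E] [NormedSpace 𝕜 E]
  [CompleteSpace E] [NormedAddCommGroup F] [NormedSpace 𝕜 F] [CompleteSpace F]
  [NormedAddCommGroup G] [NormedSpace 𝕜 G]

/-- The graph of `C` is `{(x, y) | y ∈ M, A y = B x}`, which is closed; conclude by the closed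
graph theorem. -/
theorem LinearMap.continuous_of_comp_eq_of_range_le {A : E →L[𝕜] G} {B : F →L[𝕜] G}
    {M : Submodule 𝕜 E} (hMc : IsClosed (M : Set E)) (hM : Disjoint (ker (A : E →ₗ[𝕜] G)) M)
    {C : F →ₗ[𝕜] E} (hAC : (A : E →ₗ[𝕜] G) ∘ₗ C = B) (hC : range C ≤ M) : Continuous C := by
  refine C.continuous_of_seq_closed_graph fun u x y hu hCu ↦ ?_
  have hyM : y ∈ M := hMc.mem_of_tendsto hCu (Eventually.of_forall fun n ↦ hC ⟨u n, rfl⟩)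
  have hAy : A y = B x := by
    refine tendsto_nhds_unique ((A.continuous.tendsto y).comp hCu) ?_
    convert (B.continuous.tendsto x).comp hu using 1
    ext n
    exact congr($hAC (u n))
  exact injOn_of_disjoint_ker le_rfl hM.symm hyM (hC ⟨x, rfl⟩) (hAy.trans congr($hAC x).symm)

end ClosedGraph

theorem stmt_0
    {H K G : Type*}
    [NormedAddCommGroup H] [InnerProductSpace ℂ H] [CompleteSpace H]
    [NormedAddCommGroup K] [InnerProductSpace ℂ K] [CompleteSpace K]
    [NormedAddCommGroup G] [InnerProductSpace ℂ G]
    (A : H →L[ℂ] G) (B : K →L[ℂ] G)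
    (hrange : LinearMap.range (B : K →ₗ[ℂ] G) ≤ LinearMap.range (A : H →ₗ[ℂ] G))
    (M : Submodule ℂ H) (hM : IsClosed (M : Set H))
    (hcompl : IsCompl (LinearMap.ker (A : H →ₗ[ℂ] G)) M) :
    ∃ C : K →L[ℂ] H,
      (A ∘L C = B ∧ LinearMap.range (C : K →ₗ[ℂ] H) ≤ M ∧ LinearMap.ker (C : K →ₗ[ℂ] H) = LinearMap.ker (B : K →ₗ[ℂ] G)) ∧
      ∀ C' : K →L[ℂ] H, A ∘L C' = B → LinearMap.range (C' : K →ₗ[ℂ] H) ≤ M → C' = C := by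
  obtain ⟨C, hAC, hCM⟩ := exists_comp_eq_and_range_le_of_isCompl hrange hcompl
  have hC := continuous_of_comp_eq_of_range_le hM hcompl.disjoint hAC hCM
  refine ⟨⟨C, hC⟩, ⟨ContinuousLinearMap.coe_injective hAC, hCM, ?_⟩, fun C' hAC' hC'M ↦ ?_⟩
  · exact (ker_comp_of_range_le hcompl.disjoint hCM).symm.trans congr(ker $hAC)
  · refine ContinuousLinearMap.coe_injective (eq_of_comp_eq_of_range_le hcompl.disjoint ?_ hC'M hCM)
    exact congr(ContinuousLinearMap.toLinearMap $hAC').trans hAC.symm
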